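/- arXiv:2006.11429 — 6 statements merged into one kernel-verified Lean document; each statement's English description precedes it below -/
import Mathlib

section
/- Let μ, ν ≥ 0 be real numbers. For g : Finset ℤ × Finset ℤ → ℝ define the norm ‖g‖ = ∑_{(X,Y)} |g(X,Y)|·exp(μ|X| + ν|Y|) (a sum over all pairs of finite subsets of ℤ, where |X| denotes cardinality). If g₁ and g₂ have finite norm, then the convolution product (g₁ ∗ g₂)(X,Y) = ∑_{X₁ Δ X₂ = X, Y₁ Δ Y₂ = Y} g₁(X₁,Y₁) g₂(X₂,Y₂) (sum over all quadruples of finite sets whose symmetric differences equal X and Y respectively) is absolutely convergent for every (X,Y), and ‖g₁ ∗ g₂‖ ≤ ‖g₁‖·‖g₂‖. -/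
open scoped symmDiff

/-!
Since `#(A ∆ B) ≤ #A + #B` and `μ, ν ≥ 0`, the weight `w(X,Y) = exp(μ#X + ν#Y)` is
submultiplicative along `(X₁,Y₁),(X₂,Y₂) ↦ (X₁ ∆ X₂, Y₁ ∆ Y₂)`. Hence
`∑_{q} |g₁ q₁ g₂ q₂| w(q₁ ∆ q₂) ≤ ‖g₁‖ ‖g₂‖`, and regrouping this absolutely convergent
double sum along the fibres of `∆` bounds `‖g₁ ∗ g₂‖` by the triangle inequality in each fibre.
-/

section Fiberwise

variable {β γ : Type*} {F : β → γ} {f : β → ℝ} {w : γ → ℝ}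

theorem summable_abs_on_fiber (hw : ∀ c, 0 < w c)
    (hf : Summable fun b => |f b| * w (F b)) (c : γ) :
    Summable fun b : F ⁻¹' {c} => |f b| := by
  refine ((hf.subtype (F ⁻¹' {c})).mul_right (w c)⁻¹).congr fun b => ?_
  have hb : F b.1 = c := b.2
  rw [Function.comp_apply, hb, mul_inv_cancel_right₀ (hw c).ne']

theorem abs_tsum_on_fiber_mul_le (hw : ∀ c, 0 < w c)
    (hf : Summable fun b => |f b| * w (F b)) (c : γ) :
    |∑' b : F ⁻¹' {c}, f b| * w c ≤ ∑' b : F ⁻¹' {c}, |f b| * w (F b) := by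
  have hfib : Summable fun b : F ⁻¹' {c} => ‖f b‖ := summable_abs_on_fiber hw hf c
  have htri : |∑' b : F ⁻¹' {c}, f b| ≤ ∑' b : F ⁻¹' {c}, |f b| := norm_tsum_le_tsum_norm hfib
  calc |∑' b : F ⁻¹' {c}, f b| * w c ≤ (∑' b : F ⁻¹' {c}, |f b|) * w c :=
        mul_le_mul_of_nonneg_right htri (hw c).le
    _ = ∑' b : F ⁻¹' {c}, |f b| * w (F b) := by
        rw [← tsum_mul_right]
        refine tsum_congr fun b => ?_
        rw [show F b.1 = c from b.2]

theorem summable_abs_tsum_on_fiber_mul (hw : ∀ c, 0 < w c)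
    (hf : Summable fun b => |f b| * w (F b)) :
    Summable fun c => |∑' b : F ⁻¹' {c}, f b| * w c :=
  (hf.hasSum.tsum_fiberwise F).summable.of_nonneg_of_le
    (fun c => mul_nonneg (abs_nonneg _) (hw c).le) (abs_tsum_on_fiber_mul_le hw hf)

theorem tsum_abs_tsum_on_fiber_mul_le (hw : ∀ c, 0 < w c)
    (hf : Summable fun b => |f b| * w (F b)) :
    ∑' c, |∑' b : F ⁻¹' {c}, f b| * w c ≤ ∑' b, |f b| * w (F b) := by
  have hfiberwise := hf.hasSum.tsum_fiberwise F
  calc ∑' c, |∑' b : F ⁻¹' {c}, f b| * w c ≤ ∑' c, ∑' b : F ⁻¹' {c}, |f b| * w (F b) :=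
        (summable_abs_tsum_on_fiber_mul hw hf).tsum_le_tsum (abs_tsum_on_fiber_mul_le hw hf)
          hfiberwise.summable
    _ = ∑' b, |f b| * w (F b) := hfiberwise.tsum_eq

end Fiberwise

section Submultiplicative

variable {α : Type*} {op : α → α → α} {w : α → ℝ} {g₁ g₂ : α → ℝ}

theorem abs_mul_mul_weight_le (hmul : ∀ a b, w (op a b) ≤ w a * w b)
    (a b : α) : |g₁ a * g₂ b| * w (op a b) ≤ (|g₁ a| * w a) * (|g₂ b| * w b) :=
  calc |g₁ a * g₂ b| * w (op a b) ≤ |g₁ a * g₂ b| * (w a * w b) :=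
        mul_le_mul_of_nonneg_left (hmul a b) (abs_nonneg _)
    _ = (|g₁ a| * w a) * (|g₂ b| * w b) := by rw [abs_mul]; ring

theorem summable_abs_mul_weight_mul_abs_mul_weight (hw : ∀ a, 0 ≤ w a)
    (h₁ : Summable fun a => |g₁ a| * w a) (h₂ : Summable fun a => |g₂ a| * w a) :
    Summable fun q : α × α => (|g₁ q.1| * w q.1) * (|g₂ q.2| * w q.2) :=
  h₁.mul_of_nonneg h₂ (fun a => mul_nonneg (abs_nonneg _) (hw a))
    (fun a => mul_nonneg (abs_nonneg _) (hw a))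

theorem summable_abs_mul_mul_weight (hw : ∀ a, 0 ≤ w a) (hmul : ∀ a b, w (op a b) ≤ w a * w b)
    (h₁ : Summable fun a => |g₁ a| * w a) (h₂ : Summable fun a => |g₂ a| * w a) :
    Summable fun q : α × α => |g₁ q.1 * g₂ q.2| * w (op q.1 q.2) :=
  (summable_abs_mul_weight_mul_abs_mul_weight hw h₁ h₂).of_nonneg_of_le
    (fun _ => mul_nonneg (abs_nonneg _) (hw _)) (fun q => abs_mul_mul_weight_le hmul q.1 q.2)

theorem tsum_abs_mul_mul_weight_le (hw : ∀ a, 0 ≤ w a) (hmul : ∀ a b, w (op a b) ≤ w a * w b)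
    (h₁ : Summable fun a => |g₁ a| * w a) (h₂ : Summable fun a => |g₂ a| * w a) :
    ∑' q : α × α, |g₁ q.1 * g₂ q.2| * w (op q.1 q.2) ≤
      (∑' a, |g₁ a| * w a) * ∑' a, |g₂ a| * w a := by
  have hprod := summable_abs_mul_weight_mul_abs_mul_weight hw h₁ h₂
  rw [h₁.tsum_mul_tsum h₂ hprod]
  exact (summable_abs_mul_mul_weight hw hmul h₁ h₂).tsum_le_tsum
    (fun q => abs_mul_mul_weight_le hmul q.1 q.2) hprod

end Submultiplicative

theorem Finset.card_symmDiff_le {ι : Type*} [DecidableEq ι] (s t : Finset ι) :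
    (s ∆ t).card ≤ s.card + t.card :=
  (card_le_card symmDiff_subset_union).trans (card_union_le s t)

noncomputable def expWeight {ι : Type*} (μ ν : ℝ) (p : Finset ι × Finset ι) : ℝ :=
  Real.exp (μ * p.1.card + ν * p.2.card)

theorem expWeight_symmDiff_le {ι : Type*} [DecidableEq ι] {μ ν : ℝ} (hμ : 0 ≤ μ) (hν : 0 ≤ ν)
    (a b : Finset ι × Finset ι) :
    expWeight μ ν (a ∆ b) ≤ expWeight μ ν a * expWeight μ ν b := by
  rw [expWeight, expWeight, expWeight, ← Real.exp_add, Real.exp_le_exp]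
  have h₁ : ((a.1 ∆ b.1).card : ℝ) ≤ a.1.card + b.1.card := by
    exact_mod_cast Finset.card_symmDiff_le a.1 b.1
  have h₂ : ((a.2 ∆ b.2).card : ℝ) ≤ a.2.card + b.2.card := by
    exact_mod_cast Finset.card_symmDiff_le a.2 b.2
  have := add_le_add (mul_le_mul_of_nonneg_left h₁ hμ) (mul_le_mul_of_nonneg_left h₂ hν)
  simp only [symmDiff_fst, symmDiff_snd]
  linarith

def symmDiffFiberEquiv {ι : Type*} [DecidableEq ι] (p : Finset ι × Finset ι) :
    {q : (Finset ι × Finset ι) × (Finset ι × Finset ι) //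
      q.1.1 ∆ q.2.1 = p.1 ∧ q.1.2 ∆ q.2.2 = p.2} ≃
      (fun q : (Finset ι × Finset ι) × (Finset ι × Finset ι) => q.1 ∆ q.2) ⁻¹' {p} :=
  Equiv.subtypeEquivRight fun q => (Prod.ext_iff (x := q.1 ∆ q.2) (y := p)).symm

/-- Banach algebra property of the weighted `ℓ¹` norm
`‖g‖ = ∑_{X,Y} |g(X,Y)|·exp(μ|X| + ν|Y|)` under the convolution product
`(g₁ ∗ g₂)(X,Y) = ∑_{X₁ Δ X₂ = X, Y₁ Δ Y₂ = Y} g₁(X₁,Y₁)·g₂(X₂,Y₂)`: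
the convolution converges absolutely at each `(X,Y)`, its norm sum is
summable, and `‖g₁ ∗ g₂‖ ≤ ‖g₁‖·‖g₂‖`. -/
theorem conv_norm_le (μ ν : ℝ) (hμ : 0 ≤ μ) (hν : 0 ≤ ν)
    (g₁ g₂ : Finset ℤ × Finset ℤ → ℝ)
    (h₁ : Summable fun p : Finset ℤ × Finset ℤ =>
      |g₁ p| * Real.exp (μ * p.1.card + ν * p.2.card))
    (h₂ : Summable fun p : Finset ℤ × Finset ℤ =>
      |g₂ p| * Real.exp (μ * p.1.card + ν * p.2.card)) :
    (∀ X Y : Finset ℤ,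
      Summable fun q : {q : (Finset ℤ × Finset ℤ) × (Finset ℤ × Finset ℤ) //
          q.1.1 ∆ q.2.1 = X ∧ q.1.2 ∆ q.2.2 = Y} =>
        |g₁ q.1.1 * g₂ q.1.2|) ∧
    (Summable fun p : Finset ℤ × Finset ℤ =>
      |∑' q : {q : (Finset ℤ × Finset ℤ) × (Finset ℤ × Finset ℤ) //
          q.1.1 ∆ q.2.1 = p.1 ∧ q.1.2 ∆ q.2.2 = p.2}, g₁ q.1.1 * g₂ q.1.2| *
        Real.exp (μ * p.1.card + ν * p.2.card)) ∧
    (∑' p : Finset ℤ × Finset ℤ,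
      |∑' q : {q : (Finset ℤ × Finset ℤ) × (Finset ℤ × Finset ℤ) //
          q.1.1 ∆ q.2.1 = p.1 ∧ q.1.2 ∆ q.2.2 = p.2}, g₁ q.1.1 * g₂ q.1.2| *
        Real.exp (μ * p.1.card + ν * p.2.card)) ≤
      (∑' p : Finset ℤ × Finset ℤ, |g₁ p| * Real.exp (μ * p.1.card + ν * p.2.card)) *
      (∑' p : Finset ℤ × Finset ℤ, |g₂ p| * Real.exp (μ * p.1.card + ν * p.2.card)) := by
  have hw : ∀ p : Finset ℤ × Finset ℤ, 0 < expWeight μ ν p := fun p => Real.exp_pos _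
  have hmul := expWeight_symmDiff_le (ι := ℤ) hμ hν
  have hG := summable_abs_mul_mul_weight (op := (· ∆ ·)) (fun p => (hw p).le) hmul h₁ h₂
  have hconv : ∀ p, ∑' q : {q : (Finset ℤ × Finset ℤ) × (Finset ℤ × Finset ℤ) //
      q.1.1 ∆ q.2.1 = p.1 ∧ q.1.2 ∆ q.2.2 = p.2}, g₁ q.1.1 * g₂ q.1.2 =
      ∑' q : (fun q : (Finset ℤ × Finset ℤ) × (Finset ℤ × Finset ℤ) => q.1 ∆ q.2) ⁻¹' {p},
        g₁ q.1.1 * g₂ q.1.2 :=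
    fun p => (symmDiffFiberEquiv p).tsum_eq fun q => g₁ q.1.1 * g₂ q.1.2
  have hsummable := summable_abs_tsum_on_fiber_mul hw hG
  have hle := (tsum_abs_tsum_on_fiber_mul_le hw hG).trans
    (tsum_abs_mul_mul_weight_le (fun p => (hw p).le) hmul h₁ h₂)
  simp only [hconv]
  refine ⟨fun X Y => ?_, hsummable, hle⟩
  exact (symmDiffFiberEquiv (X, Y)).summable_iff.2 (summable_abs_on_fiber hw hG (X, Y))
end

section
/- Let A be a commutative unital real Banach algebra (with ‖ab‖ ≤ ‖a‖‖b‖ and ‖1‖ = 1), and let T : A → A be a linear map with T(1) = 1 and ‖T(g)‖ ≤ ‖g‖ for all g ∈ A. Let δ ∈ A with ‖δ‖ < ln 2. Then T(exp δ) is invertible in A, and for every g ∈ A, ‖T(g·exp δ)·(T(exp δ))⁻¹ − T(g)‖ ≤ ρ(‖δ‖)·‖g‖, where ρ(r) = 2(e^r − 1)/(2 − e^r). -/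
/-!
Write `E = exp δ` and `r = e^‖δ‖ - 1`, so that `‖E - 1‖ ≤ r < 1` by comparing the exponential
series termwise with that of `e^‖δ‖`. Since `T` is a unital contraction, `‖1 - T E‖ ≤ r` as well,
so `T E` is invertible by the Neumann series with `‖(T E)⁻¹‖ ≤ (1 - r)⁻¹ = (2 - e^‖δ‖)⁻¹`.
The perturbed functional differs from `T` by `(T(gE) - T g · T E) · (T E)⁻¹`, and the
multiplicative defect splits as `T(g(E - 1)) + T g · (1 - T E)`, each term of norm at most `r‖g‖`.
-/

open Nat NormedSpace

section Exponential

variable {𝔸 : Type*} [NormedRing 𝔸] [NormedAlgebra ℝ 𝔸] [CompleteSpace 𝔸]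

theorem hasSum_exp_sub_one (x : 𝔸) :
    HasSum (fun n : ℕ => ((n + 1)! : ℝ)⁻¹ • x ^ (n + 1)) (exp x - 1) := by
  simpa using (hasSum_nat_add_iff' 1).mpr (exp_series_hasSum_exp' (𝕂 := ℝ) x)

theorem norm_exp_sub_one_le (x : 𝔸) : ‖exp x - 1‖ ≤ Real.exp ‖x‖ - 1 := by
  have hreal := hasSum_exp_sub_one (𝔸 := ℝ) ‖x‖
  rw [← Real.exp_eq_exp_ℝ] at hreal
  refine (hasSum_exp_sub_one x).norm_le_of_bounded hreal fun n => ?_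
  rw [norm_smul, Real.norm_of_nonneg (by positivity), smul_eq_mul]
  exact mul_le_mul_of_nonneg_left (norm_pow_le' x n.succ_pos) (by positivity)

end Exponential

theorem norm_inverse_one_sub_le {R : Type*} [NormedRing R] [HasSummableGeomSeries R]
    [NormOneClass R] (x : R) (hx : ‖x‖ < 1) :
    ‖Ring.inverse (1 - x)‖ ≤ (1 - ‖x‖)⁻¹ := by
  simpa [← geom_series_eq_inverse x hx] using tsum_geometric_le_of_norm_lt_one x hx

section UnitalContraction

variable {A : Type*} [NormedRing A] {T : A →+ A}

theorem norm_one_sub_map_le_of_contraction (hT1 : T 1 = 1) (hTnorm : ∀ g, ‖T g‖ ≤ ‖g‖)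
    (e : A) : ‖1 - T e‖ ≤ ‖e - 1‖ := by
  simpa [← norm_neg (1 - T e), hT1] using hTnorm (e - 1)

theorem norm_map_mul_sub_map_mul_map_le (hT1 : T 1 = 1) (hTnorm : ∀ g, ‖T g‖ ≤ ‖g‖)
    (g e : A) : ‖T (g * e) - T g * T e‖ ≤ 2 * ‖e - 1‖ * ‖g‖ := by
  have hsplit : T (g * e) - T g * T e = T (g * (e - 1)) + T g * (1 - T e) := by
    rw [mul_sub, map_sub, mul_one, mul_sub, mul_one]
    abel
  have hfirst : ‖T (g * (e - 1))‖ ≤ ‖g‖ * ‖e - 1‖ :=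
    (hTnorm _).trans (norm_mul_le _ _)
  have hsecond : ‖T g * (1 - T e)‖ ≤ ‖g‖ * ‖e - 1‖ :=
    (norm_mul_le _ _).trans <| mul_le_mul (hTnorm g)
      (norm_one_sub_map_le_of_contraction hT1 hTnorm e) (norm_nonneg _) (norm_nonneg _)
  rw [hsplit]
  linarith [norm_add_le (T (g * (e - 1))) (T g * (1 - T e))]

end UnitalContraction

/-- Abstract perturbation bound for the expectation functional: if `T` is a
unital norm-contracting linear map on a commutative unital real Banach algebra
and `‖δ‖ < ln 2`, then `T(exp δ)` is invertible and the perturbed functional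
`g ↦ T(g·exp δ)·(T(exp δ))⁻¹` differs from `T` by at most
`ρ(‖δ‖)·‖g‖` where `ρ(r) = 2(eʳ − 1)/(2 − eʳ)`. -/
theorem perturbation_bound_expectation
    {A : Type*} [NormedCommRing A] [NormedAlgebra ℝ A] [CompleteSpace A]
    [NormOneClass A]
    (T : A →ₗ[ℝ] A) (hT1 : T 1 = 1) (hTnorm : ∀ g : A, ‖T g‖ ≤ ‖g‖)
    (δ : A) (hδ : ‖δ‖ < Real.log 2) :
    IsUnit (T (NormedSpace.exp δ)) ∧
    ∀ g : A,
      ‖T (g * NormedSpace.exp δ) * Ring.inverse (T (NormedSpace.exp δ)) - T g‖ ≤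
        2 * (Real.exp ‖δ‖ - 1) / (2 - Real.exp ‖δ‖) * ‖g‖ := by
  set E := exp δ
  have hexp_lt : Real.exp ‖δ‖ < 2 := by
    simpa [Real.exp_log two_pos] using Real.exp_lt_exp.mpr hδ
  have hE : ‖E - 1‖ ≤ Real.exp ‖δ‖ - 1 := norm_exp_sub_one_le δ
  have hTE : ‖1 - T E‖ ≤ Real.exp ‖δ‖ - 1 :=
    (norm_one_sub_map_le_of_contraction (T := T.toAddMonoidHom) hT1 hTnorm E).trans hE
  have hTE_lt : ‖1 - T E‖ < 1 := by linarith
  have hunit : IsUnit (T E) := by simpa using isUnit_one_sub_of_norm_lt_one hTE_lt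
  have hinv : ‖Ring.inverse (T E)‖ ≤ (2 - Real.exp ‖δ‖)⁻¹ := by
    have := norm_inverse_one_sub_le (1 - T E) hTE_lt
    rw [sub_sub_cancel] at this
    exact this.trans (inv_anti₀ (by linarith) (by linarith))
  refine ⟨hunit, fun g => ?_⟩
  have hdefect : ‖T (g * E) - T g * T E‖ ≤ 2 * (Real.exp ‖δ‖ - 1) * ‖g‖ :=
    (norm_map_mul_sub_map_mul_map_le (T := T.toAddMonoidHom) hT1 hTnorm g E).trans (by gcongr)
  calc ‖T (g * E) * Ring.inverse (T E) - T g‖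
      = ‖(T (g * E) - T g * T E) * Ring.inverse (T E)‖ := by
        rw [sub_mul, mul_assoc, Ring.mul_inverse_cancel _ hunit, mul_one]
    _ ≤ 2 * (Real.exp ‖δ‖ - 1) * ‖g‖ * (2 - Real.exp ‖δ‖)⁻¹ :=
        (norm_mul_le _ _).trans <|
          mul_le_mul hdefect hinv (norm_nonneg _) ((norm_nonneg _).trans hdefect)
    _ = 2 * (Real.exp ‖δ‖ - 1) / (2 - Real.exp ‖δ‖) * ‖g‖ := by ring
end

section
/- Let 1 < α < 2. There exists a constant c > 0 such that for all p ∈ (0, π]: ∑_{n=1}^∞ (1 − cos(n·p))·n^{−α} ≥ c·p^{α−1}. -/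
/-!
Only the terms with `n ≤ N := ⌊π / p⌋` are kept. For them `n p ≤ π`, so
`1 - cos (n p) ≥ 2 (n p)² / π²`, and `n ^ (-α) ≥ N ^ (-α)`; summing `n²` up to `N` gives
`≳ p² N ^ (3 - α)`, which is `≳ p ^ (α - 1)` because `N ≥ π / (2 p)` and `α ≤ 3`.
-/

open Real Finset

lemma sum_Icc_one_sq_ge_cube_div_six (N : ℕ) : (N : ℝ) ^ 3 / 6 ≤ ∑ n ∈ Icc 1 N, (n : ℝ) ^ 2 := by
  induction N with
  | zero => simp
  | succ k ih =>
    rw [sum_Icc_succ_top (by omega)]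
    push_cast
    nlinarith [k.cast_nonneg (α := ℝ)]

lemma div_two_le_natFloor {x : ℝ} (hx : 1 ≤ x) : x / 2 ≤ ⌊x⌋₊ := by
  have h1 : (1 : ℝ) ≤ ⌊x⌋₊ := by exact_mod_cast Nat.one_le_floor_iff x |>.2 hx
  linarith [Nat.lt_floor_add_one x]

lemma sq_mul_div_rpow {p : ℝ} (hp : 0 < p) {a : ℝ} (ha : 0 ≤ a) (s : ℝ) :
    p ^ 2 * (a / p) ^ s = a ^ s * p ^ (2 - s) := by
  rw [div_rpow ha hp.le, rpow_sub hp, rpow_two]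
  field_simp

section PowerLawSeries

variable {α : ℝ}

lemma one_sub_cos_mul_rpow_nonneg (α p : ℝ) (n : ℕ) :
    0 ≤ (1 - cos (n * p)) * (n : ℝ) ^ (-α) :=
  mul_nonneg (sub_nonneg.2 (cos_le_one _)) (rpow_nonneg n.cast_nonneg _)

lemma summable_one_sub_cos_mul_rpow (hα : 1 < α) (p : ℝ) :
    Summable fun n : ℕ => (1 - cos (n * p)) * (n : ℝ) ^ (-α) :=
  ((summable_nat_rpow.2 (neg_lt_neg hα)).mul_left 2).of_nonneg_of_le
    (one_sub_cos_mul_rpow_nonneg α p) fun n =>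
      mul_le_mul_of_nonneg_right (by linarith [neg_one_le_cos (n * p)])
        (rpow_nonneg n.cast_nonneg _)

lemma sq_mul_rpow_le_one_sub_cos_mul_rpow (hα : 0 ≤ α) {p : ℝ} (hp : 0 ≤ p) {n N : ℕ}
    (hn : 1 ≤ n) (hnN : n ≤ N) (hNp : N * p ≤ π) :
    2 / π ^ 2 * p ^ 2 * (N : ℝ) ^ (-α) * n ^ 2 ≤ (1 - cos (n * p)) * (n : ℝ) ^ (-α) := by
  have hnN' : (n : ℝ) ≤ N := by exact_mod_cast hnN
  have hnp : |(n : ℝ) * p| ≤ π := by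
    rw [abs_of_nonneg (by positivity)]
    exact (mul_le_mul_of_nonneg_right hnN' hp).trans hNp
  have hcos : 2 / π ^ 2 * (n * p) ^ 2 ≤ 1 - cos (n * p) := by
    linarith [cos_le_one_sub_mul_cos_sq hnp]
  have hpow : (N : ℝ) ^ (-α) ≤ (n : ℝ) ^ (-α) :=
    rpow_le_rpow_of_nonpos (by exact_mod_cast hn) hnN' (neg_nonpos.2 hα)
  calc 2 / π ^ 2 * p ^ 2 * (N : ℝ) ^ (-α) * n ^ 2
      = 2 / π ^ 2 * (n * p) ^ 2 * (N : ℝ) ^ (-α) := by ring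
    _ ≤ (1 - cos (n * p)) * (N : ℝ) ^ (-α) := by gcongr
    _ ≤ (1 - cos (n * p)) * (n : ℝ) ^ (-α) := by
      gcongr
      exact sub_nonneg.2 (cos_le_one _)

lemma sq_mul_rpow_three_sub_le_tsum (hα : 1 < α) {p : ℝ} (hp : 0 ≤ p) {N : ℕ} (hN : 0 < N)
    (hNp : N * p ≤ π) :
    p ^ 2 * (N : ℝ) ^ (3 - α) / (3 * π ^ 2) ≤
      ∑' n : ℕ, (1 - cos (n * p)) * (n : ℝ) ^ (-α) := by
  have hN' : (0 : ℝ) < N := by exact_mod_cast hN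
  calc p ^ 2 * (N : ℝ) ^ (3 - α) / (3 * π ^ 2)
      = 2 / π ^ 2 * p ^ 2 * (N : ℝ) ^ (-α) * ((N : ℝ) ^ 3 / 6) := by
        rw [rpow_sub hN', rpow_neg hN'.le, rpow_ofNat]
        ring
    _ ≤ ∑ n ∈ Icc 1 N, 2 / π ^ 2 * p ^ 2 * (N : ℝ) ^ (-α) * n ^ 2 := by
        rw [← mul_sum]
        gcongr
        exact sum_Icc_one_sq_ge_cube_div_six N
    _ ≤ ∑ n ∈ Icc 1 N, (1 - cos (n * p)) * (n : ℝ) ^ (-α) := by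
        refine sum_le_sum fun n hn => ?_
        rw [mem_Icc] at hn
        exact sq_mul_rpow_le_one_sub_cos_mul_rpow (by linarith) hp hn.1 hn.2 hNp
    _ ≤ ∑' n : ℕ, (1 - cos (n * p)) * (n : ℝ) ^ (-α) :=
        (summable_one_sub_cos_mul_rpow hα p).sum_le_tsum _
          fun n _ => one_sub_cos_mul_rpow_nonneg α p n

end PowerLawSeries

/-- Lower bound on the Fourier transform of the power-law coupling: for
`1 < α < 2` there is `c > 0` with
`∑_{n=1}^∞ (1 − cos(np)) n^{−α} ≥ c·p^{α−1}` for all `p ∈ (0, π]`.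
(The `n = 0` term of the sum below vanishes, so the sum over `ℕ` is the sum
over `n ≥ 1`.) -/
theorem powerLaw_fourier_lower_bound (α : ℝ) (hα1 : 1 < α) (hα2 : α < 2) :
    ∃ c : ℝ, 0 < c ∧ ∀ p : ℝ, 0 < p → p ≤ Real.pi →
      c * p ^ (α - 1) ≤ ∑' n : ℕ, (1 - Real.cos (n * p)) * (n : ℝ) ^ (-α) := by
  refine ⟨(π / 2) ^ (3 - α) / (3 * π ^ 2), by positivity, fun p hp hpπ => ?_⟩
  set N := ⌊π / p⌋₊
  have hπp : 1 ≤ π / p := (one_le_div hp).2 hpπ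
  have hNp : N * p ≤ π := (le_div_iff₀ hp).1 (Nat.floor_le (by positivity))
  have hN : π / 2 / p ≤ N := by simpa only [div_right_comm] using div_two_le_natFloor hπp
  calc (π / 2) ^ (3 - α) / (3 * π ^ 2) * p ^ (α - 1)
      = p ^ 2 * (π / 2 / p) ^ (3 - α) / (3 * π ^ 2) := by
        rw [sq_mul_div_rpow hp (by positivity), show 2 - (3 - α) = α - 1 by ring]
        ring
    _ ≤ p ^ 2 * (N : ℝ) ^ (3 - α) / (3 * π ^ 2) := by gcongr; linarith
    _ ≤ _ := sq_mul_rpow_three_sub_le_tsum hα1 hp.le (Nat.floor_pos.2 hπp) hNp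
end

section
/- Let α > 1, let m ≥ 1 be an integer, and let 1 ≤ j, k ≤ m be integers. Then ∑_{n ∈ ℤ} |j + k − 1 + 2mn|^{−α} = (1/Γ(α)) · ∫_0^1 (λ^{j+k−2} + λ^{2m−j−k}) · (1 − λ^{2m})^{−1} · (−log λ)^{α−1} dλ. -/
/-!
The substitution `x = exp (-t)` turns `∫₀¹ x^(b-1) (-log x)^(α-1) dx` into the Gamma integral
`∫₀^∞ t^(α-1) exp (-b t) dt = Γ(α) b^(-α)`. Expanding `(1 - λ^(2m))⁻¹` as a geometric series and
integrating term by term (all terms are nonnegative), the right-hand side becomes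
`∑_{p ≥ 0} ((j+k-1+2mp)^(-α) + (2m-j-k+1+2mp)^(-α))`, and these are exactly the terms
`n = p` and `n = -(p+1)` of the lattice sum.
-/

open MeasureTheory Set Real

theorem integral_Ioo_zero_one_eq_integral_Ioi_exp_neg {E : Type*} [NormedAddCommGroup E]
    [NormedSpace ℝ E] (g : ℝ → E) :
    ∫ x in Ioo 0 1, g x = ∫ t in Ioi 0, exp (-t) • g (exp (-t)) := by
  have himage : (fun t ↦ exp (-t)) '' Ioi 0 = Ioo 0 1 := by
    rw [show (fun t ↦ exp (-t)) = exp ∘ Neg.neg from rfl, image_comp, image_neg_Ioi, neg_zero,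
      image_exp_Iio, exp_zero]
  have hderiv (t : ℝ) : HasDerivAt (fun t ↦ exp (-t)) (-exp (-t)) t := by
    simpa using (hasDerivAt_neg t).exp
  rw [← himage, integral_image_eq_integral_abs_deriv_smul measurableSet_Ioi
    (fun t _ ↦ (hderiv t).hasDerivWithinAt) (fun s _ t _ h ↦ neg_injective (exp_injective h))]
  simp only [abs_neg, abs_of_pos (exp_pos _)]

theorem integral_rpow_mul_neg_log_rpow {s b : ℝ} (hs : 0 < s) (hb : 0 < b) :
    ∫ x in Ioo 0 1, x ^ (b - 1) * (-log x) ^ (s - 1) = Gamma s * b ^ (-s) := by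
  have hGamma := integral_rpow_mul_exp_neg_mul_Ioi hs hb
  rw [one_div, inv_rpow hb.le, ← rpow_neg hb.le, mul_comm] at hGamma
  rw [integral_Ioo_zero_one_eq_integral_Ioi_exp_neg, ← hGamma]
  refine setIntegral_congr_fun measurableSet_Ioi fun t _ ↦ ?_
  rw [log_exp, neg_neg, smul_eq_mul, ← exp_mul, ← mul_assoc, ← exp_add, mul_comm]
  congr 2
  ring

theorem integrableOn_rpow_mul_neg_log_rpow {s b : ℝ} (hs : 0 < s) (hb : 0 < b) :
    IntegrableOn (fun x ↦ x ^ (b - 1) * (-log x) ^ (s - 1)) (Ioo 0 1) :=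
  .of_integral_ne_zero <| by rw [integral_rpow_mul_neg_log_rpow hs hb]; positivity

theorem summable_add_mul_natCast_rpow_neg {b L s : ℝ} (hb : 0 < b) (hL : 0 < L) (hs : 1 < s) :
    Summable fun p : ℕ ↦ (b + L * p) ^ (-s) := by
  refine (((summable_one_div_nat_add_rpow (b / L) s).mpr hs).mul_left (L ^ (-s))).congr
    fun p ↦ ?_
  have hp : 0 < (p : ℝ) + b / L := by positivity
  rw [abs_of_pos hp, one_div, ← rpow_neg hp.le, ← mul_rpow hL.le hp.le, mul_add,
    mul_div_cancel₀ _ hL.ne', add_comm]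

theorem tsum_int_abs_add_mul_rpow_neg {c L s : ℝ} (hc : 0 < c) (hcL : c < L) (hs : 1 < s) :
    ∑' n : ℤ, |c + L * n| ^ (-s) =
      ∑' p : ℕ, (c + L * p) ^ (-s) + ∑' p : ℕ, (L - c + L * p) ^ (-s) := by
  have hL : 0 < L := hc.trans hcL
  refine (HasSum.of_nat_of_neg_add_one ?_ ?_).tsum_eq
  · refine ((summable_add_mul_natCast_rpow_neg hc hL hs).hasSum).congr_fun fun p ↦ ?_
    rw [Int.cast_natCast, abs_of_pos (by positivity)]
  · refine ((summable_add_mul_natCast_rpow_neg (sub_pos.mpr hcL) hL hs).hasSum).congr_fun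
      fun p ↦ ?_
    rw [← abs_neg, abs_of_pos (by push_cast; nlinarith), neg_add, ← mul_neg]
    push_cast
    ring_nf

theorem integral_pow_mul_inv_one_sub_pow_mul_neg_log_rpow {s : ℝ} (hs : 1 < s) (a : ℕ) {L : ℕ}
    (hL : 0 < L) :
    ∫ x in Ioo 0 1, x ^ a * (1 - x ^ L)⁻¹ * (-log x) ^ (s - 1) =
      Gamma s * ∑' p : ℕ, ((a : ℝ) + 1 + L * p) ^ (-s) := by
  set F : ℕ → ℝ → ℝ := fun p x ↦ x ^ (a + L * p) * (-log x) ^ (s - 1)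
  have hF (p : ℕ) : F p = fun x ↦ x ^ ((a + 1 + L * p : ℝ) - 1) * (-log x) ^ (s - 1) := by
    funext x
    rw [add_sub_right_comm, add_sub_cancel_right, ← Nat.cast_mul, ← Nat.cast_add, rpow_natCast]
  have hb (p : ℕ) : 0 < (a + 1 + L * p : ℝ) := by positivity
  have hF_int (p : ℕ) : IntegrableOn (F p) (Ioo 0 1) := by
    rw [hF]; exact integrableOn_rpow_mul_neg_log_rpow (by linarith) (hb p)
  have hF_eq (p : ℕ) : ∫ x in Ioo 0 1, F p x = Gamma s * ((a : ℝ) + 1 + L * p) ^ (-s) := by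
    rw [hF]; exact integral_rpow_mul_neg_log_rpow (by linarith) (hb p)
  have hF_norm (p : ℕ) : ∫ x in Ioo 0 1, ‖F p x‖ = ∫ x in Ioo 0 1, F p x := by
    refine setIntegral_congr_fun measurableSet_Ioo fun x ⟨hx0, hx1⟩ ↦ norm_of_nonneg ?_
    have : 0 ≤ -log x := neg_nonneg.mpr (log_nonpos hx0.le hx1.le)
    positivity
  have hF_tsum : EqOn (fun x ↦ ∑' p, F p x)
      (fun x ↦ x ^ a * (1 - x ^ L)⁻¹ * (-log x) ^ (s - 1)) (Ioo 0 1) := by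
    intro x ⟨hx0, hx1⟩
    simp only [F, pow_add, pow_mul, mul_right_comm _ _ ((-log x) ^ (s - 1)), tsum_mul_left,
      tsum_geometric_of_lt_one (by positivity) (pow_lt_one₀ hx0.le hx1 hL.ne')]
  have hsummable : Summable fun p ↦ ∫ x in Ioo 0 1, ‖F p x‖ := by
    simp_rw [hF_norm, hF_eq]
    exact (summable_add_mul_natCast_rpow_neg (by positivity) (by positivity) hs).mul_left _
  rw [← setIntegral_congr_fun measurableSet_Ioo hF_tsum,
    ← integral_tsum_of_summable_integral_norm hF_int hsummable, ← tsum_mul_left]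
  exact tsum_congr hF_eq

theorem integrableOn_pow_mul_inv_one_sub_pow_mul_neg_log_rpow {s : ℝ} (hs : 1 < s) (a : ℕ)
    {L : ℕ} (hL : 0 < L) :
    IntegrableOn (fun x ↦ x ^ a * (1 - x ^ L)⁻¹ * (-log x) ^ (s - 1)) (Ioo 0 1) := by
  refine .of_integral_ne_zero ?_
  rw [integral_pow_mul_inv_one_sub_pow_mul_neg_log_rpow hs a hL]
  have hGamma : 0 < Gamma s := Gamma_pos_of_pos (by linarith)
  have hsum : 0 < ∑' p : ℕ, ((a : ℝ) + 1 + L * p) ^ (-s) :=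
    (summable_add_mul_natCast_rpow_neg (by positivity) (by positivity) hs).tsum_pos
      (fun p ↦ by positivity) 0 (by positivity)
  positivity

theorem periodized_coupling_integral_rep_general (α : ℝ) (hα : 1 < α)
    (m j k : ℕ) (hj1 : 1 ≤ j) (hjm : j ≤ m) (hk1 : 1 ≤ k) (hkm : k ≤ m) :
    (∑' n : ℤ, |(j : ℝ) + (k : ℝ) - 1 + 2 * (m : ℝ) * (n : ℝ)| ^ (-α)) =
      (1 / Real.Gamma α) *
        ∫ l in Set.Ioo (0 : ℝ) 1,
          (l ^ (j + k - 2) + l ^ (2 * m - j - k)) * (1 - l ^ (2 * m))⁻¹ *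
            (-Real.log l) ^ (α - 1) := by
  have hL : 0 < 2 * m := by omega
  have hc : ((j + k - 2 : ℕ) : ℝ) + 1 = j + k - 1 := by
    rw [Nat.cast_sub (by omega)]; push_cast; ring
  have hc' : ((2 * m - j - k : ℕ) : ℝ) + 1 = 2 * m - (j + k - 1) := by
    rw [Nat.cast_sub (by omega), Nat.cast_sub (by omega)]; push_cast; ring
  simp_rw [add_mul]
  rw [integral_add (integrableOn_pow_mul_inv_one_sub_pow_mul_neg_log_rpow hα _ hL)
      (integrableOn_pow_mul_inv_one_sub_pow_mul_neg_log_rpow hα _ hL),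
    integral_pow_mul_inv_one_sub_pow_mul_neg_log_rpow hα _ hL,
    integral_pow_mul_inv_one_sub_pow_mul_neg_log_rpow hα _ hL, hc, hc', ← mul_add, one_div,
    inv_mul_cancel_left₀ (Gamma_pos_of_pos (by linarith)).ne']
  have hjk : (2 : ℝ) ≤ j + k := by exact_mod_cast (by omega : 2 ≤ j + k)
  have hjkm : (j + k : ℝ) ≤ 2 * m := by exact_mod_cast (by omega : j + k ≤ 2 * m)
  push_cast
  exact tsum_int_abs_add_mul_rpow_neg (by linarith) (by linarith) hα

/-- Integral representation of the periodized power-law coupling across the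
reflection bond: for `α > 1`, `m ≥ 1` and `1 ≤ j, k ≤ m`,
`∑_{n∈ℤ} |j+k−1+2mn|^{−α}
  = Γ(α)⁻¹ ∫_0^1 (λ^{j+k−2} + λ^{2m−j−k})(1−λ^{2m})⁻¹(−log λ)^{α−1} dλ`. -/
theorem periodized_coupling_integral_rep (α : ℝ) (hα : 1 < α)
    (m j k : ℕ) (hm : 1 ≤ m) (hj1 : 1 ≤ j) (hjm : j ≤ m) (hk1 : 1 ≤ k) (hkm : k ≤ m) :
    (∑' n : ℤ, |(j : ℝ) + (k : ℝ) - 1 + 2 * (m : ℝ) * (n : ℝ)| ^ (-α)) =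
      (1 / Real.Gamma α) *
        ∫ l in Set.Ioo (0 : ℝ) 1,
          (l ^ (j + k - 2) + l ^ (2 * m - j - k)) * (1 - l ^ (2 * m))⁻¹ *
            (-Real.log l) ^ (α - 1) :=
  periodized_coupling_integral_rep_general α hα m j k hj1 hjm hk1 hkm
end

section
/- Fix 1 < α < 2 and γ ≥ ε > 0. For an integer m ≥ 1 let Λ = {1−m, …, m} ⊆ ℤ (a periodic lattice of 2m sites, indices taken mod 2m). For j, k ∈ Λ set J_{j,k} = ∑_{n∈ℤ} |j − k + 2mn|^{−α} if j ≢ k (mod 2m) and J_{j,j} = 0; set N_{j,k} = 1 if j − k ≡ ±1 (mod 2m) and 0 otherwise; and set K_{j,k} = (γ−ε)·N_{j,k} + ε·J_{j,k}. For h : Λ → ℝ define Z(h) = ∑_{σ ∈ {−1,1}^Λ} exp(−(1/2)·∑_{j,k∈Λ} K_{j,k}·(σ_j − σ_k − h_j + h_k)²). Let r : Λ → Λ be the reflection r(j) = 1 − j (which maps Λ bijectively to itself). Given h : Λ → ℝ, define h⁺ : Λ → ℝ by h⁺(j) = h(j) for 1 ≤ j ≤ m and h⁺(j) = h(1−j)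 for 1−m ≤ j ≤ 0, and define h⁻ : Λ → ℝ by h⁻(j) = h(j) for 1−m ≤ j ≤ 0 and h⁻(j) = h(1−j) for 1 ≤ j ≤ m. Then for every h : Λ → ℝ: Z(h)² ≤ Z(h⁺)·Z(h⁻). -/
/-- The periodic lattice `Λ = {1−m, …, m}` of `2m` sites, as a type. -/
abbrev Site (m : ℕ) : Type := Finset.Icc (1 - (m : ℤ)) (m : ℤ)

/-- Ising spin configurations `{−1,1}^Λ`. -/
abbrev Spin (m : ℕ) : Type := Site m → ({-1, 1} : Finset ℝ)

/-- Periodized power-law coupling `J_{j,k} = ∑_{n∈ℤ} |j−k+2mn|^{−α}` for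
`j ≢ k (mod 2m)`, and `0` for `j ≡ k (mod 2m)`. -/
noncomputable def Jc (α : ℝ) (m : ℕ) (j k : ℤ) : ℝ :=
  if (2 * (m : ℤ)) ∣ (j - k) then 0
  else ∑' n : ℤ, |(j : ℝ) - (k : ℝ) + 2 * (m : ℝ) * (n : ℝ)| ^ (-α)

/-- Periodic nearest-neighbor indicator: `1` if `j − k ≡ ±1 (mod 2m)`. -/
noncomputable def Nc (m : ℕ) (j k : ℤ) : ℝ :=
  if (2 * (m : ℤ)) ∣ (j - k - 1) ∨ (2 * (m : ℤ)) ∣ (j - k + 1) then 1 else 0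

/-- Total coupling `K_{j,k} = (γ−ε)·N_{j,k} + ε·J_{j,k}`. -/
noncomputable def Kc (α γ ε : ℝ) (m : ℕ) (j k : ℤ) : ℝ :=
  (γ - ε) * Nc m j k + ε * Jc α m j k

/-- The Gaussian-domination partition function
`Z(h) = ∑_{σ∈{−1,1}^Λ} exp(−(1/2)∑_{j,k∈Λ} K_{j,k}(σ_j − σ_k − h_j + h_k)²)`.
Only the values of `h` on `Λ` are used. -/
noncomputable def Zf (α γ ε : ℝ) (m : ℕ) (h : ℤ → ℝ) : ℝ :=
  ∑ σ : Spin m, Real.exp (-(1 / 2) * ∑ j : Site m, ∑ k : Site m,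
    Kc α γ ε m (j : ℤ) (k : ℤ) *
      ((σ j : ℝ) - (σ k : ℝ) - h (j : ℤ) + h (k : ℤ)) ^ 2)

/-!
Split `Λ` into the right half `R = {1,…,m}` and its mirror image, so that a configuration is a
pair `(x, y)` of configurations on `R`. With `p = x - h` and `q = y - h ∘ r` on `R`, reflection
invariance of the coupling gives the energy the form `E(p) + E(q) - 4 pᵀ M q`, where
`M_{jk} = K_{j,1-k}` couples the two halves across the bond `{0, 1}`. Hence
`Z(h) = ∑_{x,y} κ(x - h, y - h ∘ r)` for the kernel `κ(p, q) = f(p) f(q) exp(2 pᵀ M q)`. When `M`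
is positive semidefinite, so is `exp(2 pᵀ M q)` (expand the exponential into powers of a Gram
kernel), hence so is `κ`, and the Cauchy–Schwarz inequality for `κ` is `Z(h)² ≤ Z(h⁺) Z(h⁻)`.

For the coupling `K = (γ - ε) N + ε J`, the nearest-neighbour part of `M` is diagonal with
nonnegative entries, and `J_{j,1-k} = ∑_{n∈ℤ} (a_n(j) + a_n(k))^{-α}` with
`a_n(j) = |j - 1/2 + m n| > 0`; each term is positive semidefinite since
`(a + b)^{-α} = Γ(α)⁻¹ ∫₀^∞ t^{α-1} e^{-a t} e^{-b t} dt`.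
-/

open Finset Matrix MeasureTheory

section PosSemidefKernel

variable {E E' : Type*}

def IsPosSemidefKernel (κ : E → E → ℝ) : Prop :=
  ∀ (n : ℕ) (x : Fin n → E) (w : Fin n → ℝ), 0 ≤ ∑ i, ∑ j, w i * w j * κ (x i) (x j)

namespace IsPosSemidefKernel

variable {κ : E → E → ℝ}

theorem sum_sum_nonneg (hκ : IsPosSemidefKernel κ) {T : Type*} [Fintype T] (x : T → E)
    (w : T → ℝ) : 0 ≤ ∑ s, ∑ t, w s * w t * κ (x s) (x t) := by
  let e := (Fintype.equivFin T).symm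
  refine (hκ _ (x ∘ e) (w ∘ e)).trans_eq ?_
  exact Fintype.sum_equiv e _ _ fun i => Fintype.sum_equiv e _ _ fun j => rfl

theorem comp (hκ : IsPosSemidefKernel κ) (g : E' → E) :
    IsPosSemidefKernel fun x y => κ (g x) (g y) :=
  fun n x w => hκ n (g ∘ x) w

theorem mul_mul (hκ : IsPosSemidefKernel κ) (f : E → ℝ) :
    IsPosSemidefKernel fun x y => f x * f y * κ x y := fun n x w => by
  refine (hκ n x fun i => w i * f (x i)).trans_eq (sum_congr rfl fun i _ => sum_congr rfl
    fun j _ => by ring)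

theorem sq_sum_le (hκ : IsPosSemidefKernel κ) (hsymm : ∀ x y, κ x y = κ y x)
    {A : Type*} [Fintype A] (p q : A → E) :
    (∑ a, ∑ b, κ (p a) (q b)) ^ 2 ≤
      (∑ a, ∑ b, κ (p a) (p b)) * ∑ a, ∑ b, κ (q a) (q b) := by
  have quadratic : ∀ t : ℝ, 0 ≤ (∑ a, ∑ b, κ (p a) (p b)) * (t * t) +
      2 * (∑ a, ∑ b, κ (p a) (q b)) * t + ∑ a, ∑ b, κ (q a) (q b) := fun t => by
    have := hκ.sum_sum_nonneg (Sum.elim p q) (Sum.elim (fun _ => t) fun _ => 1)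
    simp only [Fintype.sum_sum_type, Sum.elim_inl, Sum.elim_inr, sum_add_distrib] at this
    rw [sum_comm (f := fun a b => 1 * t * κ (q a) (p b))] at this
    simp only [hsymm (q _) (p _), ← mul_sum] at this
    linarith
  have := discrim_le_zero quadratic
  rw [discrim] at this
  linarith

end IsPosSemidefKernel

theorem isPosSemidefKernel_dotProduct_pow {ι : Type*} [Fintype ι] (n : ℕ) :
    IsPosSemidefKernel fun x y : ι → ℝ => (x ⬝ᵥ y) ^ n := by
  intro N x w
  have expand : ∀ i j, w i * w j * (x i ⬝ᵥ x j) ^ n =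
      ∑ v : Fin n → ι, (w i * ∏ l, x i (v l)) * (w j * ∏ l, x j (v l)) := fun i j => by
    simp only [dotProduct, Fintype.sum_pow, mul_sum, prod_mul_distrib]
    exact sum_congr rfl fun v _ => by ring
  calc 0 ≤ ∑ v : Fin n → ι, (∑ i, w i * ∏ l, x i (v l)) * ∑ j, w j * ∏ l, x j (v l) :=
        sum_nonneg fun v _ => mul_self_nonneg _
    _ = _ := by
      simp only [expand, sum_mul_sum]
      rw [sum_comm]
      exact sum_congr rfl fun i _ => sum_comm

theorem isPosSemidefKernel_exp_dotProduct {ι : Type*} [Fintype ι] :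
    IsPosSemidefKernel fun x y : ι → ℝ => Real.exp (x ⬝ᵥ y) := by
  intro N x w
  have hasSum_exp : ∀ z : ℝ, HasSum (fun n => z ^ n / n.factorial) (Real.exp z) := fun z => by
    simpa only [Real.exp_eq_exp_ℝ] using NormedSpace.expSeries_div_hasSum_exp z
  refine HasSum.nonneg (fun n => ?_) <| hasSum_sum fun i _ => hasSum_sum fun j _ =>
    (hasSum_exp (x i ⬝ᵥ x j)).mul_left (w i * w j)
  simpa only [mul_div_assoc', ← sum_div] using
    div_nonneg (isPosSemidefKernel_dotProduct_pow n N x w) n.factorial.cast_nonneg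

open scoped MatrixOrder in
theorem Matrix.PosSemidef.isPosSemidefKernel_exp {ι : Type*} [Fintype ι] {M : Matrix ι ι ℝ}
    (hM : M.PosSemidef) : IsPosSemidefKernel fun x y : ι → ℝ => Real.exp (x ⬝ᵥ M *ᵥ y) := by
  classical
  obtain ⟨B, rfl⟩ := CStarAlgebra.nonneg_iff_eq_star_mul_self.mp hM.nonneg
  have gram : ∀ x y : ι → ℝ, x ⬝ᵥ (star B * B) *ᵥ y = B *ᵥ x ⬝ᵥ B *ᵥ y := fun x y => by
    rw [← mulVec_mulVec, dotProduct_mulVec, star_eq_conjTranspose, vecMul_conjTranspose]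
    simp only [star_trivial]
  simpa only [gram] using isPosSemidefKernel_exp_dotProduct.comp (B *ᵥ ·)

end PosSemidefKernel

section GaussianModel

variable {Λ Λ' P S : Type*} [Fintype Λ] [Fintype Λ'] [Fintype P] [Fintype S]

def gaussianEnergy (K : Λ → Λ → ℝ) (u : Λ → ℝ) : ℝ :=
  ∑ a, ∑ b, K a b * (u a - u b) ^ 2

theorem gaussianEnergy_comp_equiv (K : Λ → Λ → ℝ) (e : Λ' ≃ Λ) (u : Λ → ℝ) :
    gaussianEnergy (fun a b => K (e a) (e b)) (u ∘ e) = gaussianEnergy K u :=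
  Fintype.sum_equiv e _ _ fun _ => Fintype.sum_equiv e _ _ fun _ => rfl

section PartitionFunction

variable [DecidableEq Λ] [DecidableEq Λ']

noncomputable def partitionFunction (s : S → ℝ) (K : Λ → Λ → ℝ) (h : Λ → ℝ) : ℝ :=
  ∑ σ : Λ → S, Real.exp (-(1 / 2) * gaussianEnergy K fun a => s (σ a) - h a)

theorem partitionFunction_comp_equiv (s : S → ℝ) (K : Λ → Λ → ℝ) (e : Λ' ≃ Λ) (h : Λ → ℝ) :
    partitionFunction s (fun a b => K (e a) (e b)) (fun a => h (e a)) =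
      partitionFunction s K h :=
  Fintype.sum_equiv (e.arrowCongr (Equiv.refl S)) _ _ fun σ => by
    rw [← gaussianEnergy_comp_equiv K e]
    simp [Function.comp_def]

end PartitionFunction

noncomputable def boltzmannKernel (K : P ⊕ P → P ⊕ P → ℝ) (p q : P → ℝ) : ℝ :=
  Real.exp (-(1 / 2) * gaussianEnergy K (Sum.elim p q))

variable {K : P ⊕ P → P ⊕ P → ℝ}

theorem gaussianEnergy_sum_elim (hK : ∀ j k, K (.inr j) (.inl k) = K (.inl k) (.inr j))
    (p q : P → ℝ) :
    gaussianEnergy K (Sum.elim p q) = gaussianEnergy K (Sum.elim p 0) +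
      gaussianEnergy K (Sum.elim 0 q) - 4 * (p ⬝ᵥ of (fun j k => K (.inl j) (.inr k)) *ᵥ q) := by
  simp only [gaussianEnergy, Fintype.sum_sum_type, Sum.elim_inl, Sum.elim_inr, Pi.zero_apply, hK,
    dotProduct, mulVec, of_apply, mul_sum, sum_add_distrib, sub_zero, zero_sub, neg_sq,
    zero_pow two_ne_zero, mul_zero, sum_const_zero, add_zero, zero_add]
  rw [sum_comm (f := fun k j => K (.inl j) (.inr k) * (q k - p j) ^ 2),
    sum_comm (f := fun k j => K (.inl j) (.inr k) * p j ^ 2),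
    sum_comm (f := fun k j => K (.inl j) (.inr k) * q k ^ 2)]
  have expand : ∑ j, ∑ k, (K (.inl j) (.inr k) * (q k - p j) ^ 2 +
      K (.inl j) (.inr k) * (p j - q k) ^ 2) = ∑ j, ∑ k, (K (.inl j) (.inr k) * p j ^ 2 +
      K (.inl j) (.inr k) * p j ^ 2 + K (.inl j) (.inr k) * q k ^ 2 +
      K (.inl j) (.inr k) * q k ^ 2 - 4 * (p j * (K (.inl j) (.inr k) * q k))) :=
    sum_congr rfl fun _ _ => sum_congr rfl fun _ _ => by ring
  simp only [sum_add_distrib, sum_sub_distrib] at expand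
  linarith

theorem gaussianEnergy_comp_swap (hswap : ∀ a b, K a.swap b.swap = K a b) (u : P ⊕ P → ℝ) :
    gaussianEnergy K (u ∘ Sum.swap) = gaussianEnergy K u := by
  conv_lhs => rw [← funext₂ hswap]
  exact gaussianEnergy_comp_equiv K (Equiv.sumComm P P) u

theorem boltzmannKernel_comm (hswap : ∀ a b, K a.swap b.swap = K a b) (p q : P → ℝ) :
    boltzmannKernel K p q = boltzmannKernel K q p := by
  rw [boltzmannKernel, boltzmannKernel, ← Sum.elim_swap, gaussianEnergy_comp_swap hswap]

theorem isPosSemidefKernel_boltzmannKernel (hswap : ∀ a b, K a.swap b.swap = K a b)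
    (hM : (of fun j k => K (.inl j) (.inr k)).PosSemidef) :
    IsPosSemidefKernel (boltzmannKernel K) := by
  have hK : ∀ j k, K (.inr j) (.inl k) = K (.inl k) (.inr j) := fun j k => by
    simpa only [← hswap (.inr j), Sum.swap_inl, Sum.swap_inr, of_apply, star_trivial] using
      hM.1.apply k j
  have factor : boltzmannKernel K = fun p q =>
      Real.exp (-(1 / 2) * gaussianEnergy K (Sum.elim p 0)) *
        Real.exp (-(1 / 2) * gaussianEnergy K (Sum.elim q 0)) *
          Real.exp (p ⬝ᵥ ((2 : ℝ) • of fun j k => K (.inl j) (.inr k)) *ᵥ q) := by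
    funext p q
    rw [boltzmannKernel, gaussianEnergy_sum_elim hK, ← Sum.elim_swap (f := q),
      gaussianEnergy_comp_swap hswap, smul_mulVec, dotProduct_smul, ← Real.exp_add,
      ← Real.exp_add, smul_eq_mul]
    ring_nf
  rw [factor]
  exact (hM.smul zero_le_two).isPosSemidefKernel_exp.mul_mul _

variable [DecidableEq P]

theorem partitionFunction_eq_sum_boltzmannKernel (s : S → ℝ) (h : P ⊕ P → ℝ) :
    partitionFunction s K h = ∑ x : P → S, ∑ y : P → S,
      boltzmannKernel K (fun j => s (x j) - h (.inl j)) (fun j => s (y j) - h (.inr j)) := by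
  rw [partitionFunction, ← Fintype.sum_prod_type']
  refine Fintype.sum_equiv (Equiv.sumArrowEquivProdArrow P P S) _ _ fun σ => ?_
  rw [boltzmannKernel]
  congr
  funext a
  cases a <;> rfl

theorem partitionFunction_sq_le (s : S → ℝ) (hswap : ∀ a b, K a.swap b.swap = K a b)
    (hM : (of fun j k => K (.inl j) (.inr k)).PosSemidef) (h : P ⊕ P → ℝ) :
    partitionFunction s K h ^ 2 ≤
      partitionFunction s K (Sum.elim (h ∘ .inl) (h ∘ .inl)) *
        partitionFunction s K (Sum.elim (h ∘ .inr) (h ∘ .inr)) := by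
  simp only [partitionFunction_eq_sum_boltzmannKernel, Sum.elim_inl, Sum.elim_inr,
    Function.comp_apply]
  exact (isPosSemidefKernel_boltzmannKernel hswap hM).sq_sum_le (boltzmannKernel_comm hswap) _ _

end GaussianModel

theorem sum_mul_rpow_add_neg_nonneg {ι : Type*} [Fintype ι] {α : ℝ} (hα : 0 < α) {a : ι → ℝ}
    (ha : ∀ i, 0 < a i) (w : ι → ℝ) :
    0 ≤ ∑ i, ∑ j, w i * w j * (a i + a j) ^ (-α) := by
  set f : ι → ℝ → ℝ := fun i t => w i * Real.exp (-(a i * t))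
  have laplace : ∀ i j, ∫ t in Set.Ioi 0, t ^ (α - 1) * Real.exp (-((a i + a j) * t)) =
      (a i + a j) ^ (-α) * Real.Gamma α := fun i j => by
    rw [Real.integral_rpow_mul_exp_neg_mul_Ioi hα (add_pos (ha i) (ha j)), one_div,
      Real.inv_rpow (add_pos (ha i) (ha j)).le, Real.rpow_neg (add_pos (ha i) (ha j)).le]
  have term : ∀ i j, (fun t => t ^ (α - 1) * (f i t * f j t)) =
      fun t => w i * w j * (t ^ (α - 1) * Real.exp (-((a i + a j) * t))) := fun i j => by
    funext t
    simp only [f, add_mul, neg_add, Real.exp_add]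
    ring
  have hΓ := Real.Gamma_pos_of_pos hα
  have integrable : ∀ i j, IntegrableOn (fun t => t ^ (α - 1) * (f i t * f j t)) (Set.Ioi 0) :=
    fun i j => by
      rw [term]
      refine Integrable.const_mul (.of_integral_ne_zero ?_) _
      rw [laplace]
      exact (mul_pos (Real.rpow_pos_of_pos (add_pos (ha i) (ha j)) _) hΓ).ne'
  suffices 0 ≤ (∑ i, ∑ j, w i * w j * (a i + a j) ^ (-α)) * Real.Gamma α from
    nonneg_of_mul_nonneg_left this hΓ
  calc 0 ≤ ∫ t in Set.Ioi 0, t ^ (α - 1) * ((∑ i, f i t) * ∑ j, f j t) :=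
        setIntegral_nonneg measurableSet_Ioi fun t ht =>
          mul_nonneg (Real.rpow_nonneg (le_of_lt ht) _) (mul_self_nonneg _)
    _ = _ := by
      simp_rw [sum_mul_sum, mul_sum, sum_mul]
      rw [integral_finsetSum _ fun i _ => integrable_finsetSum _ fun j _ => integrable i j]
      refine sum_congr rfl fun i _ => ?_
      rw [integral_finsetSum _ fun j _ => integrable i j]
      refine sum_congr rfl fun j _ => ?_
      rw [term, integral_const_mul, laplace]
      ring

theorem summable_abs_add_mul_int_rpow_neg {α : ℝ} (hα : 1 < α) (c : ℝ) {L : ℝ} (hL : 0 < L) :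
    Summable fun n : ℤ => |c + L * n| ^ (-α) := by
  refine (((Real.summable_one_div_int_add_rpow (c / L) α).2 hα).mul_left (L ^ (-α))).congr
    fun n => ?_
  rw [show c + L * n = L * (n + c / L) by field_simp; ring, abs_mul, abs_of_pos hL,
    Real.mul_rpow hL.le (abs_nonneg _), Real.rpow_neg (abs_nonneg _), one_div]

theorem Jc_eq_of_sub_eq (α : ℝ) (m : ℕ) {j k j' k' : ℤ} (h : j - k = j' - k') :
    Jc α m j k = Jc α m j' k' := by
  have hr : (j : ℝ) - k = j' - k' := by rw [← Int.cast_sub, h, Int.cast_sub]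
  simp only [Jc, h, hr]

theorem Nc_eq_of_sub_eq (m : ℕ) {j k j' k' : ℤ} (h : j - k = j' - k') :
    Nc m j k = Nc m j' k' := by
  simp only [Nc, h]

theorem Kc_eq_of_sub_eq (α γ ε : ℝ) (m : ℕ) {j k j' k' : ℤ} (h : j - k = j' - k') :
    Kc α γ ε m j k = Kc α γ ε m j' k' := by
  rw [Kc, Kc, Jc_eq_of_sub_eq α m h, Nc_eq_of_sub_eq m h]

theorem Jc_comm (α : ℝ) (m : ℕ) (j k : ℤ) : Jc α m j k = Jc α m k j := by
  refine if_congr dvd_sub_comm rfl ?_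
  rw [← (Equiv.neg ℤ).tsum_eq]
  congr! 2 with n
  rw [← abs_neg, Equiv.neg_apply]
  push_cast
  ring_nf

theorem Nc_comm (m : ℕ) (j k : ℤ) : Nc m j k = Nc m k j := by
  refine if_congr ?_ rfl rfl
  rw [or_comm, ← dvd_neg, ← dvd_neg (b := j - k - 1)]
  ring_nf

theorem Kc_comm (α γ ε : ℝ) (m : ℕ) (j k : ℤ) : Kc α γ ε m j k = Kc α γ ε m k j := by
  rw [Kc, Kc, Jc_comm, Nc_comm]

theorem Kc_one_sub_one_sub (α γ ε : ℝ) (m : ℕ) (j k : ℤ) :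
    Kc α γ ε m (1 - j) (1 - k) = Kc α γ ε m j k := by
  rw [Kc_comm, Kc_eq_of_sub_eq α γ ε m (by ring : 1 - k - (1 - j) = j - k)]

section CrossCoupling

variable {m : ℕ} {j k : ℤ}

-- The only nearest-neighbour bonds across the reflection planes are `{0, 1}` and `{m, 1 - m}`.
theorem Nc_cross_eq_zero (hj : j ∈ Icc 1 (m : ℤ)) (hk : k ∈ Icc 1 (m : ℤ)) (hjk : j ≠ k) :
    Nc m j (1 - k) = 0 := by
  rw [mem_Icc] at hj hk
  rw [Nc, if_neg]
  rintro (h | h)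
  · have := Int.eq_zero_of_dvd_of_nonneg_of_lt (by omega) (by omega) h
    omega
  · have := Int.eq_zero_of_dvd_of_nonneg_of_lt (by omega) (by omega) (dvd_sub dvd_rfl h)
    omega

theorem half_offset_sign (hj : j ∈ Icc 1 (m : ℤ)) (n : ℤ) :
    (0 ≤ n → 0 < (j : ℝ) - 1 / 2 + m * n) ∧ (n < 0 → (j : ℝ) - 1 / 2 + m * n < 0) := by
  rw [mem_Icc] at hj
  have hj1 : (1 : ℝ) ≤ j := by exact_mod_cast hj.1
  have hjm : (j : ℝ) ≤ m := by exact_mod_cast hj.2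
  refine ⟨fun hn => ?_, fun hn => ?_⟩
  · have : (0 : ℝ) ≤ n := by exact_mod_cast hn
    nlinarith [m.cast_nonneg (α := ℝ)]
  · have : (n : ℝ) ≤ -1 := by exact_mod_cast (by omega : n ≤ -1)
    nlinarith

theorem half_offset_pos (hj : j ∈ Icc 1 (m : ℤ)) (n : ℤ) : 0 < |(j : ℝ) - 1 / 2 + m * n| := by
  refine abs_pos.2 ?_
  rcases le_or_gt 0 n with hn | hn
  exacts [((half_offset_sign hj n).1 hn).ne', ((half_offset_sign hj n).2 hn).ne]

-- `j - 1/2 + m n` and `k - 1/2 + m n` both have the sign of `n + 1/2`.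
theorem abs_cross_eq (hj : j ∈ Icc 1 (m : ℤ)) (hk : k ∈ Icc 1 (m : ℤ)) (n : ℤ) :
    |(j : ℝ) - ((1 - k : ℤ) : ℝ) + 2 * m * n| =
      |(j : ℝ) - 1 / 2 + m * n| + |(k : ℝ) - 1 / 2 + m * n| := by
  rw [show (j : ℝ) - ((1 - k : ℤ) : ℝ) + 2 * m * n =
    ((j : ℝ) - 1 / 2 + m * n) + ((k : ℝ) - 1 / 2 + m * n) by push_cast; ring,
    abs_add_eq_add_abs_iff]
  rcases le_or_gt 0 n with hn | hn
  · exact .inl ⟨((half_offset_sign hj n).1 hn).le, ((half_offset_sign hk n).1 hn).le⟩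
  · exact .inr ⟨((half_offset_sign hj n).2 hn).le, ((half_offset_sign hk n).2 hn).le⟩

theorem hasSum_Jc_cross {α : ℝ} (hα : 1 < α) (hj : j ∈ Icc 1 (m : ℤ)) (hk : k ∈ Icc 1 (m : ℤ)) :
    HasSum (fun n : ℤ => (|(j : ℝ) - 1 / 2 + m * n| + |(k : ℝ) - 1 / 2 + m * n|) ^ (-α))
      (Jc α m j (1 - k)) := by
  simp_rw [← abs_cross_eq hj hk]
  rw [mem_Icc] at hj hk
  have hm : (0 : ℝ) < 2 * m := by
    have : 0 < m := by omega
    positivity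
  rw [Jc, if_neg fun h => by
    have := Int.eq_zero_of_dvd_of_nonneg_of_lt (by omega) (by omega) h
    omega]
  exact (summable_abs_add_mul_int_rpow_neg hα _ hm).hasSum

theorem sum_mul_Kc_cross_nonneg {α γ ε : ℝ} (hα : 1 < α) (hε : 0 ≤ ε) (hγε : ε ≤ γ)
    (w : Icc (1 : ℤ) m → ℝ) : 0 ≤ ∑ j, ∑ k, w j * w k * Kc α γ ε m j (1 - k) := by
  have hN : 0 ≤ ∑ j, ∑ k, w j * w k * Nc m j (1 - k) := by
    refine sum_nonneg fun j _ => ?_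
    rw [Fintype.sum_eq_single j fun k hkj => by
      rw [Nc_cross_eq_zero j.2 k.2 fun h => hkj (Subtype.ext h).symm, mul_zero]]
    refine mul_nonneg (mul_self_nonneg _) ?_
    unfold Nc
    split_ifs <;> norm_num
  have hJ : 0 ≤ ∑ j, ∑ k, w j * w k * Jc α m j (1 - k) := by
    refine HasSum.nonneg (fun n : ℤ => ?_) (hasSum_sum fun j _ => hasSum_sum fun k _ =>
      (hasSum_Jc_cross hα j.2 k.2).mul_left (w j * w k))
    exact sum_mul_rpow_add_neg_nonneg (by linarith)
      (a := fun i : Icc (1 : ℤ) m => |((i : ℤ) : ℝ) - 1 / 2 + m * n|)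
      (fun i => half_offset_pos i.2 n) w
  have split : ∑ j, ∑ k, w j * w k * Kc α γ ε m j (1 - k) =
      (γ - ε) * ∑ j, ∑ k, w j * w k * Nc m j (1 - k) +
        ε * ∑ j, ∑ k, w j * w k * Jc α m j (1 - k) := by
    simp only [mul_sum, ← sum_add_distrib, Kc]
    exact sum_congr rfl fun j _ => sum_congr rfl fun k _ => by ring
  rw [split]
  exact add_nonneg (mul_nonneg (sub_nonneg.2 hγε) hN) (mul_nonneg hε hJ)

theorem posSemidef_Kc_cross {α γ ε : ℝ} (hα : 1 < α) (hε : 0 ≤ ε) (hγε : ε ≤ γ) (m : ℕ) :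
    (of fun j k : Icc (1 : ℤ) m => Kc α γ ε m j (1 - k)).PosSemidef := by
  refine .of_dotProduct_mulVec_nonneg (IsHermitian.ext fun j k => ?_) fun w => ?_
  · exact Kc_eq_of_sub_eq α γ ε m (by ring)
  · refine (sum_mul_Kc_cross_nonneg hα hε hγε w).trans_eq ?_
    simp only [dotProduct, mulVec, star_trivial, of_apply, mul_sum]
    exact sum_congr rfl fun j _ => sum_congr rfl fun k _ => by ring

end CrossCoupling

-- `inl j` is the site `j`, and `inr j` its mirror image `1 - j`.
def siteEquiv (m : ℕ) : Icc (1 : ℤ) m ⊕ Icc (1 : ℤ) m ≃ Site m where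
  toFun := Sum.elim (fun j => ⟨j, by grind⟩) fun j => ⟨1 - j, by grind⟩
  invFun s := if hs : 1 ≤ (s : ℤ) then .inl ⟨s, by grind⟩
    else .inr ⟨1 - s, by grind⟩
  left_inv := by rintro (j | j) <;> grind
  right_inv s := by grind

theorem siteEquiv_swap (m : ℕ) (a : Icc (1 : ℤ) m ⊕ Icc (1 : ℤ) m) :
    (siteEquiv m a.swap : ℤ) = 1 - siteEquiv m a := by
  rcases a with j | j <;> simp [siteEquiv]

theorem Zf_eq_partitionFunction (α γ ε : ℝ) (m : ℕ) (h : ℤ → ℝ) :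
    Zf α γ ε m h = partitionFunction (fun σ : ({-1, 1} : Finset ℝ) => (σ : ℝ))
      (fun a b => Kc α γ ε m (siteEquiv m a) (siteEquiv m b)) fun a => h (siteEquiv m a) := by
  rw [partitionFunction_comp_equiv _ (fun j k : Site m => Kc α γ ε m j k) (siteEquiv m)
    fun j => h j]
  simp only [Zf, partitionFunction, gaussianEnergy]
  congr! 6
  ring

theorem reflection_positivity_bound_general (α γ ε : ℝ) (hα1 : 1 < α)
    (hε : 0 < ε) (hγε : ε ≤ γ) (m : ℕ) (h : ℤ → ℝ) :
    Zf α γ ε m h ^ 2 ≤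
      Zf α γ ε m (fun j => if 1 ≤ j then h j else h (1 - j)) *
        Zf α γ ε m (fun j => if j ≤ 0 then h j else h (1 - j)) := by
  have hswap : ∀ a b, Kc α γ ε m (siteEquiv m a.swap) (siteEquiv m b.swap) =
      Kc α γ ε m (siteEquiv m a) (siteEquiv m b) := fun a b => by
    rw [siteEquiv_swap, siteEquiv_swap, Kc_one_sub_one_sub]
  have hplus : (fun a => if 1 ≤ (siteEquiv m a : ℤ) then h (siteEquiv m a)
      else h (1 - siteEquiv m a)) =
      Sum.elim (fun j : Icc (1 : ℤ) m => h j) fun j : Icc (1 : ℤ) m => h j := by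
    funext a
    rcases a with ⟨j, hj⟩ | ⟨j, hj⟩ <;> rw [mem_Icc] at hj
    · exact if_pos hj.1
    · exact (if_neg (show ¬1 ≤ 1 - j by omega)).trans (congrArg h (sub_sub_cancel 1 j))
  have hminus : (fun a => if (siteEquiv m a : ℤ) ≤ 0 then h (siteEquiv m a)
      else h (1 - siteEquiv m a)) =
      Sum.elim (fun j : Icc (1 : ℤ) m => h (1 - j)) fun j : Icc (1 : ℤ) m => h (1 - j) := by
    funext a
    rcases a with ⟨j, hj⟩ | ⟨j, hj⟩ <;> rw [mem_Icc] at hj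
    · exact if_neg (show ¬j ≤ 0 by omega)
    · exact if_pos (show 1 - j ≤ 0 by omega)
  rw [Zf_eq_partitionFunction, Zf_eq_partitionFunction, Zf_eq_partitionFunction, hplus, hminus]
  exact partitionFunction_sq_le _ hswap (posSemidef_Kc_cross hα1 hε.le hγε m) _

/-- Reflection positivity about the bond between sites `0` and `1`:
`Z(h)² ≤ Z(h⁺)·Z(h⁻)`, where `h⁺` agrees with `h` on `{1,…,m}` and is the
reflection `j ↦ h(1−j)` on `{1−m,…,0}`, and `h⁻` agrees with `h` on
`{1−m,…,0}` and is the reflection on `{1,…,m}`. -/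
theorem reflection_positivity_bound (α γ ε : ℝ) (hα1 : 1 < α) (hα2 : α < 2)
    (hε : 0 < ε) (hγε : ε ≤ γ) (m : ℕ) (hm : 1 ≤ m) (h : ℤ → ℝ) :
    Zf α γ ε m h ^ 2 ≤
      Zf α γ ε m (fun j => if 1 ≤ j then h j else h (1 - j)) *
        Zf α γ ε m (fun j => if j ≤ 0 then h j else h (1 - j)) :=
  reflection_positivity_bound_general α γ ε hα1 hε hγε m h
end

section
/- Fix 1 < α < 2. For an integer m ≥ 1 let Λ = {1−m, …, m} ⊆ ℤ (a periodic lattice of 2m sites, indices taken mod 2m), let J_{j,k} = ∑_{n∈ℤ} |j − k + 2mn|^{−α} for j ≢ k (mod 2m) with J_{j,j} = 0, let Λ* = {kπ/m : k = 0,1,…,2m−1}, and for p ∈ Λ* set R_m(p) = ∑_{n∈Λ, n≠0} J_{0,n}·(1 − cos(pn)). Then sup_{m ≥ 1} (1/(2m))·∑_{p ∈ Λ*, p ≠ 0} 1/R_m(p) < ∞. -/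
/-- The periodic lattice `Λ = {1−m, …, m}` of `2m` sites. -/
noncomputable abbrev Lam (m : ℕ) : Finset ℤ := Finset.Icc (1 - (m : ℤ)) (m : ℤ)

/-- `R_m(p) = ∑_{n∈Λ, n≠0} J_{0,n}·(1 − cos(pn))`. -/
noncomputable def Rm (α : ℝ) (m : ℕ) (p : ℝ) : ℝ :=
  ∑ n ∈ (Lam m).erase 0, Jc α m 0 n * (1 - Real.cos (p * (n : ℝ)))


open Real Finset

/-! For `1 ≤ k ≤ m` and `p = kπ/m`, keep in `R_m(p)` only the sites `1 ≤ n ≤ N := ⌊m/k⌋` and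
only the unshifted image `|n|^{-α} ≥ (m/k)^{-α}` in each coupling. There `pn ≤ π`, so
`1 - cos(pn) ≥ 2(pn)²/π²`, and summing `n²` up to `N ≥ m/(2k)` gives
`R_m(kπ/m) ≥ (m/k)^{1-α}/12`. The modes `k > m` reduce to `2m - k` because
`R_m(2π - p) = R_m(p)`, and `∑_{k ≤ 2m} k^{1-α} ≤ (2m)^{2-α}/(2-α)` telescopes from
`s k^{s-1} ≤ k^s - (k-1)^s` (Bernoulli) with `s = 2 - α > 0`. -/

lemma cube_div_three_le_sum_Icc_sq (N : ℕ) : (N : ℝ) ^ 3 / 3 ≤ ∑ n ∈ Icc 1 N, (n : ℝ) ^ 2 := by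
  induction N with
  | zero => simp
  | succ N ih =>
    rw [sum_Icc_succ_top (by omega)]
    push_cast
    nlinarith [(N.cast_nonneg : (0 : ℝ) ≤ N)]

lemma mul_rpow_sub_one_le_rpow_sub_rpow {x s : ℝ} (hx : 1 ≤ x) (hs0 : 0 ≤ s) (hs1 : s ≤ 1) :
    s * x ^ (s - 1) ≤ x ^ s - (x - 1) ^ s := by
  have hx0 : 0 < x := by linarith
  have hbern := rpow_one_add_le_one_add_mul_self (p := s) (s := -1 / x)
    (by rw [neg_div, neg_le_neg_iff, div_le_one hx0]; exact hx) hs0 hs1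
  rw [show 1 + -1 / x = (x - 1) / x by field_simp; ring, div_rpow (by linarith) hx0.le,
    div_le_iff₀ (rpow_pos_of_pos hx0 s)] at hbern
  rw [rpow_sub_one hx0.ne']
  have : (1 + s * (-1 / x)) * x ^ s = x ^ s - s * (x ^ s / x) := by field_simp; ring
  linarith

lemma sum_Icc_rpow_sub_one_le {s : ℝ} (hs0 : 0 < s) (hs1 : s ≤ 1) (M : ℕ) :
    ∑ k ∈ Icc 1 M, (k : ℝ) ^ (s - 1) ≤ (M : ℝ) ^ s / s := by
  induction M with
  | zero => simp [zero_rpow hs0.ne']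
  | succ M ih =>
    rw [sum_Icc_succ_top (by omega), le_div_iff₀ hs0]
    have hstep := mul_rpow_sub_one_le_rpow_sub_rpow (x := (M + 1 : ℕ)) (by simp) hs0.le hs1
    rw [le_div_iff₀ hs0] at ih
    push_cast at hstep ⊢
    rw [add_sub_cancel_right] at hstep
    linarith

lemma sum_Ico_div_rpow_le {s : ℝ} (hs0 : 0 < s) (hs1 : s ≤ 1) (m : ℕ) :
    ∑ k ∈ Ico 1 (2 * m), ((m : ℝ) / k) ^ (1 - s) ≤ 2 * m / s := by
  have hsplit : ∀ k ∈ Ico 1 (2 * m),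
      ((m : ℝ) / k) ^ (1 - s) = (m : ℝ) ^ (1 - s) * (k : ℝ) ^ (s - 1) := fun k _ => by
      rw [div_rpow (by positivity) (by positivity), div_eq_mul_inv, ← rpow_neg (by positivity),
        neg_sub]
  have htwo : (2 : ℝ) ^ s ≤ 2 := by
    simpa using rpow_le_rpow_of_exponent_le (x := 2) (by norm_num) hs1
  calc ∑ k ∈ Ico 1 (2 * m), ((m : ℝ) / k) ^ (1 - s)
      = (m : ℝ) ^ (1 - s) * ∑ k ∈ Ico 1 (2 * m), (k : ℝ) ^ (s - 1) := by
        rw [mul_sum]; exact sum_congr rfl hsplit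
    _ ≤ (m : ℝ) ^ (1 - s) * ∑ k ∈ Icc 1 (2 * m), (k : ℝ) ^ (s - 1) := by
        gcongr
        exact Ico_subset_Icc_self
    _ ≤ (m : ℝ) ^ (1 - s) * ((2 * m : ℝ) ^ s / s) := by
        gcongr
        exact_mod_cast sum_Icc_rpow_sub_one_le hs0 hs1 (2 * m)
    _ ≤ (m : ℝ) ^ (1 - s) * (2 * (m : ℝ) ^ s / s) := by
        rw [mul_rpow (by norm_num) (by positivity)]
        gcongr
    _ = 2 * m / s := by
        rw [mul_div_assoc', mul_left_comm, ← rpow_add' (by positivity) (by simp), sub_add_cancel,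
          rpow_one]

lemma Jc_nonneg (α : ℝ) (m : ℕ) (j k : ℤ) : 0 ≤ Jc α m j k := by
  unfold Jc
  split_ifs
  exacts [le_rfl, tsum_nonneg fun _ => by positivity]

lemma abs_sub_rpow_neg_le_Jc {α : ℝ} (hα : 1 < α) {m : ℕ} (hm : 0 < m) {j k : ℤ}
    (h : ¬ (2 * (m : ℤ)) ∣ j - k) : |(j : ℝ) - k| ^ (-α) ≤ Jc α m j k := by
  have hinj : Function.Injective fun n : ℤ => j - k + 2 * m * n := fun a b hab => by
    simpa [hm.ne'] using hab
  have hs : Summable fun n : ℤ => |(j : ℝ) - k + 2 * m * n| ^ (-α) := by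
    exact ((summable_abs_int_rpow hα).comp_injective hinj).congr fun n => by simp
  rw [Jc, if_neg h]
  simpa using hs.le_tsum 0 fun _ _ => by positivity

lemma Rm_two_pi_sub (α : ℝ) (m : ℕ) (p : ℝ) : Rm α m (2 * π - p) = Rm α m p := by
  refine sum_congr rfl fun n _ => ?_
  rw [show (2 * π - p) * n = n * (2 * π) - p * n by ring, cos_int_mul_two_pi_sub]

lemma sum_Icc_le_Rm (α : ℝ) {m N : ℕ} (hNm : N ≤ m) (q : ℝ) :
    ∑ n ∈ Icc 1 N, Jc α m 0 n * (1 - cos (q * n)) ≤ Rm α m q := by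
  have hsub : (Icc 1 N).map Nat.castEmbedding ⊆ (Lam m).erase 0 := by
    intro n hn
    simp only [mem_map, mem_Icc, Nat.castEmbedding_apply] at hn
    obtain ⟨j, ⟨hj1, hjN⟩, rfl⟩ := hn
    simp only [mem_erase, mem_Icc]
    omega
  calc ∑ n ∈ Icc 1 N, Jc α m 0 n * (1 - cos (q * n))
      = ∑ n ∈ (Icc 1 N).map Nat.castEmbedding, Jc α m 0 n * (1 - cos (q * n)) := by simp
    _ ≤ Rm α m q := sum_le_sum_of_subset_of_nonneg hsub fun n _ _ =>
        mul_nonneg (Jc_nonneg α m 0 n) (sub_nonneg.2 (cos_le_one _))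

lemma rpow_neg_mul_le_Rm {α : ℝ} (hα : 1 < α) {m N : ℕ} (hNm : N ≤ m) {q y : ℝ} (hNy : (N : ℝ) ≤ y)
    (hq : 0 ≤ q) (hNq : N * q ≤ π) :
    y ^ (-α) * (2 / π ^ 2 * q ^ 2) * (N ^ 3 / 3) ≤ Rm α m q := by
  have hy : 0 ≤ y := N.cast_nonneg.trans hNy
  have hterm : ∀ n ∈ Icc 1 N,
      y ^ (-α) * (2 / π ^ 2 * (q * n) ^ 2) ≤ Jc α m 0 n * (1 - cos (q * n)) := by
    intro n hn
    rw [mem_Icc] at hn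
    have hn1 : (1 : ℝ) ≤ n := by exact_mod_cast hn.1
    have hnN : (n : ℝ) ≤ N := by exact_mod_cast hn.2
    have hdvd : ¬ (2 * (m : ℤ)) ∣ 0 - n := fun h => by
      have h' : 2 * (m : ℤ) ∣ n := by simpa using h
      have := Int.le_of_dvd (by omega) h'
      omega
    have hJ : y ^ (-α) ≤ Jc α m 0 n := calc
      y ^ (-α) ≤ (n : ℝ) ^ (-α) :=
        rpow_le_rpow_of_nonpos (by linarith) (hnN.trans hNy) (by linarith)
      _ ≤ Jc α m 0 n := by simpa using abs_sub_rpow_neg_le_Jc hα (by omega) hdvd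
    have hcos := cos_le_one_sub_mul_cos_sq (x := q * n) <| abs_le.2
      ⟨by nlinarith [pi_pos], by nlinarith⟩
    exact mul_le_mul hJ (by linarith) (by positivity) (Jc_nonneg α m 0 n)
  calc y ^ (-α) * (2 / π ^ 2 * q ^ 2) * (N ^ 3 / 3)
      ≤ y ^ (-α) * (2 / π ^ 2 * q ^ 2) * ∑ n ∈ Icc 1 N, (n : ℝ) ^ 2 := by
        have := rpow_nonneg hy (-α)
        gcongr
        exact cube_div_three_le_sum_Icc_sq N
    _ = ∑ n ∈ Icc 1 N, y ^ (-α) * (2 / π ^ 2 * (q * n) ^ 2) := by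
        rw [mul_sum]; exact sum_congr rfl fun n _ => by ring
    _ ≤ ∑ n ∈ Icc 1 N, Jc α m 0 n * (1 - cos (q * n)) := sum_le_sum hterm
    _ ≤ Rm α m q := sum_Icc_le_Rm α hNm q

lemma rpow_div_le_Rm {α : ℝ} (hα : 1 < α) {m k : ℕ} (hk : 1 ≤ k) (hkm : k ≤ m) :
    ((m : ℝ) / k) ^ (1 - α) / 12 ≤ Rm α m (k * π / m) := by
  set y : ℝ := (m : ℝ) / k with hy_def
  have hk0 : (0 : ℝ) < k := by exact_mod_cast hk
  have hm0 : (0 : ℝ) < m := by exact_mod_cast hk.trans hkm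
  have hy : 0 < y := by positivity
  set N := m / k
  have hNy : (N : ℝ) ≤ y := (le_div_iff₀ hk0).2 (by exact_mod_cast Nat.div_mul_le_self m k)
  have hyN : y / 2 ≤ N := by
    have hlt : m < N * k + k := Nat.lt_div_mul_add hk
    have hkN : k ≤ N * k := Nat.le_mul_of_pos_left k (Nat.div_pos hkm hk)
    have : (m : ℝ) ≤ 2 * (N * k) := by exact_mod_cast (by omega : m ≤ 2 * (N * k))
    rw [hy_def, div_div, div_le_iff₀ (by positivity)]
    linarith
  have hq : (k : ℝ) * π / m = π / y := by rw [hy_def]; field_simp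
  have hNq : N * (π / y) ≤ π := by
    rw [mul_div_assoc', div_le_iff₀ hy, mul_comm π y]
    exact mul_le_mul_of_nonneg_right hNy pi_pos.le
  rw [hq]
  calc y ^ (1 - α) / 12 = y ^ (-α) * (2 / π ^ 2 * (π / y) ^ 2) * ((y / 2) ^ 3 / 3) := by
        rw [show 1 - α = -α + 1 by ring, rpow_add hy, rpow_one]
        field_simp
        ring
    _ ≤ y ^ (-α) * (2 / π ^ 2 * (π / y) ^ 2) * (N ^ 3 / 3) := by gcongr
    _ ≤ Rm α m (π / y) := rpow_neg_mul_le_Rm hα (Nat.div_le_self m k) hNy (by positivity) hNq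

lemma inv_Rm_le {α : ℝ} (hα : 1 < α) {m k : ℕ} (hk : 1 ≤ k) (hkm : k ≤ m) :
    (Rm α m (k * π / m))⁻¹ ≤ 12 * ((m : ℝ) / k) ^ (α - 1) := by
  have hy : (0 : ℝ) < m / k := div_pos (by exact_mod_cast hk.trans hkm) (by exact_mod_cast hk)
  calc (Rm α m (k * π / m))⁻¹ ≤ (((m : ℝ) / k) ^ (1 - α) / 12)⁻¹ :=
        inv_anti₀ (by positivity) (rpow_div_le_Rm hα hk hkm)
    _ = 12 * ((m : ℝ) / k) ^ (α - 1) := by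
        rw [inv_div, div_eq_mul_inv, ← rpow_neg hy.le, neg_sub]

lemma inv_Rm_le_add {α : ℝ} (hα : 1 < α) {m k : ℕ} (hk : 1 ≤ k) (hk2m : k < 2 * m) :
    (Rm α m (k * π / m))⁻¹ ≤
      12 * (((m : ℝ) / k) ^ (α - 1) + ((m : ℝ) / (2 * m - k : ℕ)) ^ (α - 1)) := by
  rw [mul_add]
  rcases le_or_gt k m with hkm | hmk
  · have : 0 ≤ 12 * ((m : ℝ) / (2 * m - k : ℕ)) ^ (α - 1) := by positivity
    linarith [inv_Rm_le hα hk hkm]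
  · have hreflect : (k : ℝ) * π / m = 2 * π - (2 * m - k : ℕ) * π / m := by
      have : (m : ℝ) ≠ 0 := by exact_mod_cast (by omega : m ≠ 0)
      rw [Nat.cast_sub hk2m.le]
      field_simp
      push_cast
      ring
    have : 0 ≤ 12 * ((m : ℝ) / k) ^ (α - 1) := by positivity
    rw [hreflect, Rm_two_pi_sub]
    linarith [inv_Rm_le hα (m := m) (k := 2 * m - k) (by omega) (by omega)]

/-- Uniform boundedness of the lattice sums of `1/R_m(p)` over the nonzero
modes `p = kπ/m ∈ Λ*`, for `1 < α < 2`: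
`sup_{m≥1} (1/(2m)) ∑_{p∈Λ*, p≠0} 1/R_m(p) < ∞`. -/
theorem sup_inverse_Rm_sum_finite (α : ℝ) (hα1 : 1 < α) (hα2 : α < 2) :
    ∃ B : ℝ, ∀ m : ℕ, 1 ≤ m →
      (1 / (2 * (m : ℝ))) *
          ∑ k ∈ Finset.Ico 1 (2 * m), (Rm α m ((k : ℝ) * Real.pi / (m : ℝ)))⁻¹ ≤ B := by
  refine ⟨24 / (2 - α), fun m hm => ?_⟩
  have hs : 0 < 2 - α := by linarith
  have hreflect : ∑ k ∈ Ico 1 (2 * m), ((m : ℝ) / (2 * m - k : ℕ)) ^ (α - 1) =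
      ∑ k ∈ Ico 1 (2 * m), ((m : ℝ) / k) ^ (α - 1) := by
    rw [sum_Ico_reflect (fun j : ℕ => ((m : ℝ) / j) ^ (α - 1)) 1 (Nat.le_succ _),
      Nat.add_sub_cancel_left, Nat.add_sub_cancel]
  have hsum := sum_Ico_div_rpow_le hs (by linarith) m
  rw [show 1 - (2 - α) = α - 1 by ring] at hsum
  calc (1 / (2 * (m : ℝ))) * ∑ k ∈ Ico 1 (2 * m), (Rm α m (k * π / m))⁻¹
      ≤ (1 / (2 * (m : ℝ))) * ∑ k ∈ Ico 1 (2 * m),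
          12 * (((m : ℝ) / k) ^ (α - 1) + ((m : ℝ) / (2 * m - k : ℕ)) ^ (α - 1)) := by
        gcongr with k hk
        rw [mem_Ico] at hk
        exact inv_Rm_le_add hα1 hk.1 hk.2
    _ = (1 / (2 * (m : ℝ))) * (24 * ∑ k ∈ Ico 1 (2 * m), ((m : ℝ) / k) ^ (α - 1)) := by
        rw [← mul_sum, sum_add_distrib, hreflect]
        ring
    _ ≤ (1 / (2 * (m : ℝ))) * (24 * (2 * m / (2 - α))) := by gcongr
    _ = 24 / (2 - α) := by
        have : (m : ℝ) ≠ 0 := by positivity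
        field_simp
end
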